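/- Let F be a free group of rank 2 with basis {f₀, f₁}, let G = F × ℤ, and let H = ⟨(f₀, 0), (f₁, 1)⟩ ≤ G. Then H ∩ (F × {0}) is a nontrivial normal subgroup of H of infinite index in H, and is not finitely generated. -/

import Mathlib

/-!
Send `f₀` to the lamp at the origin and `f₁` to the generator of `ℤ` in the lamplighter group
`ℤ/2 ≀ ℤ`. Since `H` is the graph of the map `F → ℤ` killing `f₀` and sending `f₁` to `1`, the
elements of `H ∩ (F × {0})` land in the base group, i.e. act as finitely supported lamp
configurations. A finite generating set would confine all these configurations to a fixed finite
set of positions, but `f₁ⁿ f₀ f₁⁻ⁿ` lights the lamp at position `n`, for every `n`.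
-/

open Function Multiplicative RegularWreathProduct

theorem Subgroup.FG.map {G M : Type*} [Group G] [Group M] {K : Subgroup G} (hK : K.FG)
    (f : G →* M) : (K.map f).FG := by
  classical
  obtain ⟨S, rfl⟩ := hK
  exact ⟨S.image f, by rw [Finset.coe_image, MonoidHom.map_closure]⟩

theorem Subgroup.index_inf_ker_subgroupOf {G M : Type*} [Group G] [Group M] (H : Subgroup G)
    (f : G →* M) : ((H ⊓ f.ker).subgroupOf H).index = Nat.card (H.map f) := by
  rw [inf_subgroupOf_left, ← MonoidHom.ker_domRestrict, index_ker, MonoidHom.domRestrict_range]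

namespace RegularWreathProduct

variable {D Q : Type*} [Group D] [Group Q]

def finiteSupport : Subgroup (D ≀ᵣ Q) where
  carrier := {x | (mulSupport x.left).Finite}
  one_mem' := by simp
  mul_mem' {a b} ha hb :=
    (ha.union (hb.preimage (mul_right_injective a.right⁻¹).injOn)).subset (mulSupport_mul _ _)
  inv_mem' {a} ha :=
    (ha.preimage (mul_right_injective a.right).injOn).subset fun x hx => by simpa using hx

def baseSupportedIn (T : Set Q) : Subgroup (D ≀ᵣ Q) where
  carrier := {x | x.right = 1 ∧ mulSupport x.left ⊆ T}
  one_mem' := by simp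
  mul_mem' {a b} ha hb := by
    refine ⟨by simp [ha.1, hb.1], (mulSupport_mul _ _).trans (Set.union_subset ha.2 ?_)⟩
    simpa [ha.1] using hb.2
  inv_mem' {a} ha := ⟨by simp [ha.1], by simpa [ha.1] using ha.2⟩

variable [DecidableEq Q]

def single (q : Q) (d : D) : D ≀ᵣ Q := ⟨Pi.mulSingle q d, 1⟩

theorem inl_mul_single_mul_inv (q q' : Q) (d : D) :
    inl q * single q' d * (inl q)⁻¹ = single (q * q') d := by
  ext x
  · simp [single, Pi.mulSingle_apply, inv_mul_eq_iff_eq_mul]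
  · simp [single]

theorem not_fg_of_single_mem [Infinite Q] {L : Subgroup (D ≀ᵣ Q)}
    (hL : L ≤ rightHom.ker ⊓ finiteSupport) {d : D} (hd : d ≠ 1) (hsingle : ∀ q, single q d ∈ L) :
    ¬ L.FG := by
  rintro ⟨S, rfl⟩
  set T := ⋃ s ∈ S, mulSupport s.left
  have hT : T.Finite :=
    S.finite_toSet.biUnion fun s hs => (hL (Subgroup.subset_closure hs)).2
  have hST : Subgroup.closure (S : Set (D ≀ᵣ Q)) ≤ baseSupportedIn T :=
    (Subgroup.closure_le _).2 fun s hs =>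
      ⟨(hL (Subgroup.subset_closure hs)).1,
        Set.subset_biUnion_of_mem (u := fun s => mulSupport s.left) hs⟩
  obtain ⟨q, hq⟩ := hT.infinite_compl.nonempty
  exact hq ((hST (hsingle q)).2 (by simpa [single] using hd))

end RegularWreathProduct

abbrev Lamplighter := Multiplicative (ZMod 2) ≀ᵣ Multiplicative ℤ

noncomputable def lamplighterRep : FreeGroup (Fin 2) →* Lamplighter :=
  FreeGroup.lift ![single 1 (ofAdd 1), inl (ofAdd 1)]

@[simp] theorem lamplighterRep_of_zero : lamplighterRep (.of 0) = single 1 (ofAdd 1) := by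
  simp [lamplighterRep]

@[simp] theorem lamplighterRep_of_one : lamplighterRep (.of 1) = inl (ofAdd 1) := by
  simp [lamplighterRep]

theorem lamplighterRep_conj (n : ℤ) :
    lamplighterRep (.of 1 ^ n * .of 0 * (.of 1 ^ n)⁻¹) = single (ofAdd n) (ofAdd 1) := by
  rw [map_mul, map_mul, map_inv, map_zpow, lamplighterRep_of_zero, lamplighterRep_of_one,
    ← map_zpow, inl_mul_single_mul_inv, mul_one, ← ofAdd_zsmul, zsmul_one, Int.cast_id]

theorem lamplighterRep_mem_finiteSupport (w : FreeGroup (Fin 2)) :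
    lamplighterRep w ∈ finiteSupport := by
  suffices ⊤ ≤ finiteSupport.comap lamplighterRep from this trivial
  rw [← FreeGroup.closure_range_of, Subgroup.closure_le]
  rintro _ ⟨i, rfl⟩
  fin_cases i
  · simp [finiteSupport, single]
  · simp [finiteSupport]

def graphGens : Set (FreeGroup (Fin 2) × Multiplicative ℤ) :=
  {(FreeGroup.of 0, 1), (FreeGroup.of 1, ofAdd 1)}

theorem closure_graphGens_le_graph :
    Subgroup.closure graphGens ≤ (rightHom.comp lamplighterRep).graph := by
  rw [Subgroup.closure_le]
  rintro _ (rfl | rfl) <;> simp [single]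

theorem of_one_mem_closure_graphGens :
    (FreeGroup.of 1, ofAdd 1) ∈ Subgroup.closure graphGens :=
  Subgroup.subset_closure (by simp [graphGens])

theorem map_snd_closure_graphGens :
    (Subgroup.closure graphGens).map (MonoidHom.snd _ _) = ⊤ := by
  refine eq_top_iff.2 fun t _ => ⟨(FreeGroup.of 1, ofAdd 1) ^ t.toAdd,
    zpow_mem of_one_mem_closure_graphGens _, ?_⟩
  simp [← ofAdd_zsmul]

theorem of_zero_mem_closure_graphGens_inf_ker_snd :
    (FreeGroup.of 0, 1) ∈ Subgroup.closure graphGens ⊓ (MonoidHom.snd _ _).ker :=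
  ⟨Subgroup.subset_closure (by simp [graphGens]), rfl⟩

theorem closure_graphGens_inf_ker_snd_ne_bot :
    Subgroup.closure graphGens ⊓ (MonoidHom.snd _ _).ker ≠ ⊥ := by
  intro h
  have := h ▸ of_zero_mem_closure_graphGens_inf_ker_snd
  exact FreeGroup.of_ne_one _ (congrArg Prod.fst (Subgroup.mem_bot.1 this))

theorem not_fg_closure_graphGens_inf_ker_snd :
    ¬ (Subgroup.closure graphGens ⊓ (MonoidHom.snd _ _).ker).FG := by
  set K := Subgroup.closure graphGens ⊓ (MonoidHom.snd _ _).ker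
  intro hK
  refine not_fg_of_single_mem (L := K.map (lamplighterRep.comp (MonoidHom.fst _ _)))
    (d := ofAdd (1 : ZMod 2)) ?_ (by decide) (fun q => ?_) (hK.map _)
  · rw [Subgroup.map_le_iff_le_comap]
    intro g hg
    have hgraph := MonoidHom.mem_graph.1 (closure_graphGens_le_graph hg.1)
    exact ⟨MonoidHom.mem_ker.2 (hgraph.trans hg.2), lamplighterRep_mem_finiteSupport g.1⟩
  · let t : FreeGroup (Fin 2) × Multiplicative ℤ := (FreeGroup.of 1, ofAdd 1) ^ q.toAdd
    have ht : t ∈ Subgroup.closure graphGens := zpow_mem of_one_mem_closure_graphGens _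
    refine ⟨t * (FreeGroup.of 0, 1) * t⁻¹, ?_, ?_⟩
    · have h0 := of_zero_mem_closure_graphGens_inf_ker_snd
      exact Subgroup.mem_inf.2 ⟨mul_mem (mul_mem ht h0.1) (inv_mem ht),
        MonoidHom.mem_ker.2 (by simp [t])⟩
    · simpa [t] using lamplighterRep_conj q.toAdd

/-- for `H = ⟨(f₀,0),(f₁,1)⟩ ≤ F₂ × ℤ`, the subgroup `H ∩ (F₂ × {0})`
is nontrivial, normal of infinite index in `H`, and not finitely generated. -/
theorem stmt_11 (H : Subgroup (FreeGroup (Fin 2) × Multiplicative ℤ))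
    (hH : H = Subgroup.closure
      {(FreeGroup.of 0, (1 : Multiplicative ℤ)), (FreeGroup.of 1, Multiplicative.ofAdd 1)}) :
    H ⊓ (MonoidHom.snd (FreeGroup (Fin 2)) (Multiplicative ℤ)).ker ≠ ⊥ ∧
    ((H ⊓ (MonoidHom.snd (FreeGroup (Fin 2)) (Multiplicative ℤ)).ker).subgroupOf H).Normal ∧
    ((H ⊓ (MonoidHom.snd (FreeGroup (Fin 2)) (Multiplicative ℤ)).ker).subgroupOf H).index = 0 ∧
    ¬ (H ⊓ (MonoidHom.snd (FreeGroup (Fin 2)) (Multiplicative ℤ)).ker).FG := by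
  subst hH
  refine ⟨closure_graphGens_inf_ker_snd_ne_bot, ?_, ?_, not_fg_closure_graphGens_inf_ker_snd⟩
  · rw [Subgroup.inf_subgroupOf_left]
    infer_instance
  · rw [Subgroup.index_inf_ker_subgroupOf]
    exact (map_snd_closure_graphGens ▸ Subgroup.card_top).trans Nat.card_eq_zero_of_infinite
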